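/- arXiv:2308.10655 — 3 statements merged into one kernel-verified Lean document; each statement's English description precedes it below -/
import Mathlib

section
/- Let p be any primitive and let p_1, ..., p_n be primitives that always succeed without needing the store (each p_i is either a tell primitive or a graphical primitive). Then the guarded list GL = [p → p_1,...,p_n] refines the sequential composition SC = p; p_1; ...; p_n, that is, for every store τ, every history in Oh(GL)(τ) is a contraction of some history in Oh(SC)(τ). Consequently, any reachability property established on the stores generated by executing GL from a store τ is also established on the stores generated by executing SC from τ. -/
/-!
A guarded list runs atomically: from `τ` it either deadlocks at once, with history `[τ]`, or
makes one transition to a terminated configuration, with history `[τ, φ]`. Tell and graphical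
primitives never block, so the guarded list deadlocks exactly when its guard `p` does, and then
`p; p₁; ⋯; pₙ` deadlocks at once with the same history `[τ]`. Otherwise the sequential
composition can run `p` and then `p₁, …, pₙ` one transition at a time through the same
intermediate stores, ending in `φ`; dropping those intermediate stores leaves `[τ, φ]`.
Every store of a contraction occurs in the original history, so reachability transfers.
-/

namespace Bach

/-- Primitives: the store primitives tell/ask/nask/get over si-terms `I`,
together with graphical primitives from `G`. -/
inductive Prim (I : Type) (G : Type) where
  | tell (t : I)
  | ask (t : I)
  | nask (t : I)
  | get (t : I)
  | gr (g : G)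

/-- A store is a finite multiset of si-terms. -/
abbrev Store (I : Type) := Multiset I

/-- One-step semantics of primitives: `primStep p σ τ` iff `⟨p,σ⟩ → ⟨E,τ⟩`:
`tell(t)` adds `t`; `ask(t)` requires `t` present; `nask(t)` requires `t` absent;
`get(t)` removes one occurrence of `t`; graphical primitives always succeed
leaving the store unchanged. -/
def primStep {I G : Type} : Prim I G → Store I → Store I → Prop
  | .tell t, σ, τ => τ = t ::ₘ σ
  | .ask t, σ, τ => t ∈ σ ∧ τ = σ
  | .nask t, σ, τ => t ∉ σ ∧ τ = σ
  | .get t, σ, τ => σ = t ::ₘ τ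
  | .gr _, σ, τ => τ = σ

/-- Successive execution of a list of primitives. -/
def listExec {I G : Type} : List (Prim I G) → Store I → Store I → Prop
  | [], σ, τ => τ = σ
  | p :: l, σ, τ => ∃ ρ, primStep p σ ρ ∧ listExec l ρ τ

/-- Agents: primitives, guarded lists `[p → p₁,…,pₙ]`, sequential (`;`),
parallel (`∥`) and choice (`+`) composition. -/
inductive Agent (I : Type) (G : Type) where
  | prim (p : Prim I G)
  | glist (p : Prim I G) (l : List (Prim I G))
  | seq (A B : Agent I G)
  | par (A B : Agent I G)
  | choice (A B : Agent I G)

/-- Transition relation: `Step A σ o τ` means `⟨A,σ⟩ → ⟨o,τ⟩`, where `o = none`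
stands for the terminated symbol `E` (and `E;A`, `E∥A`, `A∥E` are identified
with `A`).  A guarded list makes a single transition from `σ` to `τ` iff its
guard makes a transition from `σ` to some `ρ` and executing the remaining
primitives successively from `ρ` ends in `τ`. -/
inductive Step {I G : Type} : Agent I G → Store I → Option (Agent I G) → Store I → Prop
  | prim {p σ τ} : primStep p σ τ → Step (.prim p) σ none τ
  | glist {p l σ ρ τ} : primStep p σ ρ → listExec l ρ τ → Step (.glist p l) σ none τ
  | seqE {A B σ τ} : Step A σ none τ → Step (.seq A B) σ (some B) τ
  | seqS {A A' B σ τ} : Step A σ (some A') τ → Step (.seq A B) σ (some (.seq A' B)) τ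
  | parLE {A B σ τ} : Step A σ none τ → Step (.par A B) σ (some B) τ
  | parLS {A A' B σ τ} : Step A σ (some A') τ → Step (.par A B) σ (some (.par A' B)) τ
  | parRE {A B σ τ} : Step B σ none τ → Step (.par A B) σ (some A) τ
  | parRS {A B B' σ τ} : Step B σ (some B') τ → Step (.par A B) σ (some (.par A B')) τ
  | choiceL {A B σ o τ} : Step A σ o τ → Step (.choice A B) σ o τ
  | choiceR {A B σ o τ} : Step B σ o τ → Step (.choice A B) σ o τ

/-- Configurations `⟨A,σ⟩`, with `none` standing for the terminated symbol `E`. -/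
abbrev Conf (I G : Type) := Option (Agent I G) × Store I

/-- Step relation on configurations. -/
def CStep {I G : Type} : Conf I G → Conf I G → Prop
  | (some A, σ), (o, τ) => Step A σ o τ
  | (none, _), _ => False

/-- Observables `Of(A)`: final stores of finite computations from the empty store,
marked `true` (= δ⁺, success: ending in `E`) or `false` (= δ⁻, deadlock: ending
stuck in some agent `B ≠ E`). -/
def Obs {I G : Type} (A : Agent I G) : Set (Store I × Bool) :=
  {x | Relation.ReflTransGen CStep ((some A, (0 : Store I)) : Conf I G) (none, x.1) ∧
        x.2 = true}
  ∪ {x | (∃ B, Relation.ReflTransGen CStep ((some A, (0 : Store I)) : Conf I G) (some B, x.1) ∧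
          ∀ c, ¬ CStep ((some B, x.1) : Conf I G) c) ∧ x.2 = false}

/-- A language is a set of agents closed under `;`, `∥` and `+`. -/
def IsLanguage {I G : Type} (L : Set (Agent I G)) : Prop :=
  (∀ A B, A ∈ L → B ∈ L → Agent.seq A B ∈ L) ∧
  (∀ A B, A ∈ L → B ∈ L → Agent.par A B ∈ L) ∧
  (∀ A B, A ∈ L → B ∈ L → Agent.choice A B ∈ L)

/-- `IsModularEmbedding C D L' L`: the coder `C` maps `L'` into `L` and is
compositional w.r.t. `;`, `∥`, `+` (property P₂); the element-wise decoder `D`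
preserves the termination mark δ⁺/δ⁻ (property P₃); and for every `A ∈ L'`,
`Of(A) = { D x : x ∈ Of(C A) }` (commuting diagram, with P₁ built in by taking
`D` element-wise). -/
def IsModularEmbedding {I G : Type} (C : Agent I G → Agent I G)
    (D : Store I × Bool → Store I × Bool) (L' L : Set (Agent I G)) : Prop :=
  (∀ A ∈ L', C A ∈ L) ∧
  (∀ A B, A ∈ L' → B ∈ L' → C (Agent.seq A B) = Agent.seq (C A) (C B)) ∧
  (∀ A B, A ∈ L' → B ∈ L' → C (Agent.par A B) = Agent.par (C A) (C B)) ∧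
  (∀ A B, A ∈ L' → B ∈ L' → C (Agent.choice A B) = Agent.choice (C A) (C B)) ∧
  (∀ x, (D x).2 = x.2) ∧
  (∀ A ∈ L', Obs A = D '' Obs (C A))

/-- Modular embedding of `L'` into `L`, written `L' ≤ L`. -/
def ModEmbed {I G : Type} (L' L : Set (Agent I G)) : Prop :=
  ∃ C D, IsModularEmbedding C D L' L

/-- Kinds of store primitives. -/
inductive PKind where
  | ask | nask | get | tell

/-- The primitive uses only store-primitive kinds from `X`
(graphical primitives are always allowed). -/
def primIn {I G : Type} (X : Set PKind) : Prim I G → Prop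
  | .tell _ => PKind.tell ∈ X
  | .ask _ => PKind.ask ∈ X
  | .nask _ => PKind.nask ∈ X
  | .get _ => PKind.get ∈ X
  | .gr _ => True

/-- All primitives occurring in the agent use only kinds from `X`. -/
def agentIn {I G : Type} (X : Set PKind) : Agent I G → Prop
  | .prim p => primIn X p
  | .glist p l => primIn X p ∧ ∀ q ∈ l, primIn X q
  | .seq A B => agentIn X A ∧ agentIn X B
  | .par A B => agentIn X A ∧ agentIn X B
  | .choice A B => agentIn X A ∧ agentIn X B

/-- The agent contains no guarded list construct. -/
def glFree {I G : Type} : Agent I G → Prop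
  | .prim _ => True
  | .glist _ _ => False
  | .seq A B => glFree A ∧ glFree B
  | .par A B => glFree A ∧ glFree B
  | .choice A B => glFree A ∧ glFree B

/-- `gdLg(X)`: the fragment with guarded lists using store primitives from `X`. -/
def gdLg {I G : Type} (X : Set PKind) : Set (Agent I G) := {A | agentIn X A}

/-- `rLg(X)`: the fragment without guarded lists using store primitives from `X`. -/
def rLg {I G : Type} (X : Set PKind) : Set (Agent I G) := {A | agentIn X A ∧ glFree A}

/-- Computational histories: finite sequences of stores ended by a success mark
δ⁺ (`true`) or deadlock mark δ⁻ (`false`), or infinite sequences of stores. -/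
inductive Hist (I : Type) where
  | fin (l : List (Store I)) (success : Bool)
  | inf (f : ℕ → Store I)

/-- History-based operational semantics `Oh(A)(τ)`: the sequences of stores along
maximal transition sequences from `⟨A,τ⟩`, marked δ⁺ if ending in `E`, δ⁻ if
ending stuck in a non-`E` agent, and infinite otherwise. -/
def Oh {I G : Type} (A : Agent I G) (τ : Store I) : Set (Hist I) :=
  {h | ∃ cs : List (Conf I G),
      cs.Chain' CStep ∧ cs.head? = some (some A, τ) ∧
      (((∃ σ, cs.getLast? = some ((none : Option (Agent I G)), σ)) ∧
          h = Hist.fin (cs.map Prod.snd) true) ∨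
       ((∃ B σ, cs.getLast? = some (some B, σ) ∧ ∀ c, ¬ CStep ((some B, σ) : Conf I G) c) ∧
          h = Hist.fin (cs.map Prod.snd) false))}
  ∪ {h | ∃ f : ℕ → Conf I G, f 0 = (some A, τ) ∧ (∀ n, CStep (f n) (f (n + 1))) ∧
      h = Hist.inf fun n => (f n).2}

/-- `Contraction h_c h` (`h_c ⪯ h`): `h_c` is obtained from `h` by removing
finitely many (possibly zero) stores, never a termination mark. -/
def Contraction {I : Type} : Hist I → Hist I → Prop
  | .fin lc bc, .fin l b => bc = b ∧ lc.Sublist l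
  | .inf fc, .inf f =>
      ∃ g : ℕ → ℕ, StrictMono g ∧ (Set.range g)ᶜ.Finite ∧ ∀ n, fc n = f (g n)
  | _, _ => False

/-- `FCon F lc l`: the list `lc` of stores is an F-preserving contraction of `l`:
each removed store `ρ` agrees on `F` with the next kept store. -/
inductive FCon {I : Type} (F : Store I → Prop) : List (Store I) → List (Store I) → Prop
  | nil : FCon F [] []
  | keep {σ lc l} : FCon F lc l → FCon F (σ :: lc) (σ :: l)
  | drop {σ ρ lc l} : (F ρ ↔ F σ) → FCon F (σ :: lc) l → FCon F (σ :: lc) (ρ :: l)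

/-- `FPCon F h_c h` (`h_c ≪_F h`): `h_c` is an F-preserving contraction of `h`:
a contraction in which every removed store agrees on `F` with the next kept store. -/
def FPCon {I : Type} (F : Store I → Prop) : Hist I → Hist I → Prop
  | .fin lc bc, .fin l b => bc = b ∧ FCon F lc l
  | .inf fc, .inf f =>
      ∃ g : ℕ → ℕ, StrictMono g ∧ (Set.range g)ᶜ.Finite ∧ (∀ n, fc n = f (g n)) ∧
        ∀ m, m ∉ Set.range g → ∀ n, m < g n → (∀ k < n, g k < m) → (F (f m) ↔ F (f (g n)))
  | _, _ => False

/-- Primitives that always succeed without consulting the store: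
tell primitives and graphical primitives. -/
def safePrim {I G : Type} : Prim I G → Prop
  | .tell _ => True
  | .gr _ => True
  | _ => False

/-- The sequential composition `p; p₁; ⋯; pₙ` of a nonempty list of primitives. -/
def seqComp {I G : Type} (p : Prim I G) : List (Prim I G) → Agent I G
  | [] => .prim p
  | q :: l => .seq (.prim p) (seqComp q l)

/-- The history contains a store satisfying `F` (reachability of `F`). -/
def histReach {I : Type} (F : Store I → Prop) : Hist I → Prop
  | .fin l _ => ∃ σ ∈ l, F σ
  | .inf f => ∃ n, F (f n)

/-- A head is a primitive or a guarded list of primitives. -/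
def isHead {I G : Type} : Agent I G → Prop
  | .prim _ => True
  | .glist _ _ => True
  | _ => False

/-- Agents in normal form: `N ::= p | p;A | N+N`, where `p` is a primitive
(store-related or graphical) or a guarded list and `A` is an arbitrary agent. -/
inductive NormalForm {I G : Type} : Agent I G → Prop
  | head {p : Agent I G} : isHead p → NormalForm p
  | seq {p A : Agent I G} : isHead p → NormalForm (Agent.seq p A)
  | choice {N₁ N₂ : Agent I G} : NormalForm N₁ → NormalForm N₂ →
      NormalForm (Agent.choice N₁ N₂)

/-- Left merge `⌊`: `p⌊Z = p;Z`, `(p;A)⌊Z = p;(A∥Z)`, `(N₁+N₂)⌊Z = N₁⌊Z + N₂⌊Z`. -/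
def lmerge {I G : Type} : Agent I G → Agent I G → Agent I G
  | .prim p, Z => .seq (.prim p) Z
  | .glist p l, Z => .seq (.glist p l) Z
  | .seq (.prim p) A, Z => .seq (.prim p) (.par A Z)
  | .seq (.glist p l) A, Z => .seq (.glist p l) (.par A Z)
  | .choice N₁ N₂, Z => .choice (lmerge N₁ Z) (lmerge N₂ Z)
  | N, Z => .seq N Z

/-- The normalization translation τ: `τ(p) = p`, `τ(X;Y) = τ(X);Y`,
`τ(X+Y) = τ(X)+τ(Y)`, `τ(X∥Y) = τ(X)⌊Y + τ(Y)⌊X`. -/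
def tauNF {I G : Type} : Agent I G → Agent I G
  | .prim p => .prim p
  | .glist p l => .glist p l
  | .seq X Y => .seq (tauNF X) Y
  | .choice X Y => .choice (tauNF X) (tauNF Y)
  | .par X Y => .choice (lmerge (tauNF X) Y) (lmerge (tauNF Y) X)

section

variable {I G : Type}

theorem safePrim.exists_primStep {q : Prim I G} (hq : safePrim q) (σ : Store I) :
    ∃ ρ, primStep q σ ρ := by
  cases q with
  | tell t => exact ⟨t ::ₘ σ, rfl⟩
  | gr g => exact ⟨σ, rfl⟩
  | _ => exact hq.elim

theorem exists_listExec_of_safe {l : List (Prim I G)} (hl : ∀ q ∈ l, safePrim q)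
    (σ : Store I) : ∃ φ, listExec l σ φ := by
  induction l generalizing σ with
  | nil => exact ⟨σ, rfl⟩
  | cons q l ih =>
    obtain ⟨ρ, hq⟩ := (hl q List.mem_cons_self).exists_primStep σ
    obtain ⟨φ, hφ⟩ := ih (fun r hr => hl r (List.mem_cons_of_mem q hr)) ρ
    exact ⟨φ, ρ, hq, hφ⟩

theorem not_cStep_of_fst_eq_none {c c' : Conf I G} (hc : c.1 = none) : ¬ CStep c c' := by
  obtain ⟨_ | _, _⟩ := c
  · exact id
  · cases hc

theorem cStep_glist_iff {p : Prim I G} {l : List (Prim I G)} {σ : Store I} {c : Conf I G} :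
    CStep (some (Agent.glist p l), σ) c ↔ c.1 = none ∧ ∃ ρ, primStep p σ ρ ∧ listExec l ρ c.2 := by
  obtain ⟨o, τ⟩ := c
  constructor
  · rintro (_ | ⟨hp, hl⟩)
    exact ⟨rfl, _, hp, hl⟩
  · rintro ⟨rfl, ρ, hp, hl⟩
    exact Step.glist hp hl

theorem not_cStep_seqComp {p : Prim I G} {l : List (Prim I G)} {τ : Store I}
    (hp : ∀ ρ, ¬ primStep p τ ρ) (c : Conf I G) : ¬ CStep (some (seqComp p l), τ) c := by
  obtain ⟨o, σ⟩ := c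
  cases l with
  | nil => rintro ⟨h⟩; exact hp _ h
  | cons q l =>
    intro hc
    cases hc with
    | seqE h => cases h with | prim h => exact hp _ h
    | seqS h => cases h

theorem exists_run_seqComp {p : Prim I G} {l : List (Prim I G)} {τ ρ φ : Store I}
    (hp : primStep p τ ρ) (hl : listExec l ρ φ) :
    ∃ cs : List (Conf I G), ((some (seqComp p l), τ) :: cs).IsChain CStep ∧
      cs.getLast? = some (none, φ) := by
  induction l generalizing p τ ρ with
  | nil =>
    exact ⟨[(none, ρ)], List.isChain_pair.2 (Step.prim hp), by rw [show φ = ρ from hl]; rfl⟩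
  | cons q l ih =>
    obtain ⟨ρ', hq, hl⟩ := hl
    obtain ⟨cs, hcs, hlast⟩ := ih hq hl
    refine ⟨(some (seqComp q l), ρ) :: cs, List.isChain_cons_cons.2 ⟨?_, hcs⟩, ?_⟩
    · exact Step.seqE (Step.prim hp)
    · simp [List.getLast?_cons, hlast]

theorem fin_mem_Oh_of_run {A : Agent I G} {τ φ : Store I} {cs : List (Conf I G)}
    (hcs : ((some A, τ) :: cs).IsChain CStep) (hlast : cs.getLast? = some (none, φ)) :
    Hist.fin (τ :: cs.map Prod.snd) true ∈ Oh A τ :=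
  Or.inl ⟨_, hcs, rfl, Or.inl ⟨⟨φ, by simp [List.getLast?_cons, hlast]⟩, rfl⟩⟩

theorem fin_mem_Oh_of_stuck {A : Agent I G} {τ : Store I}
    (hstuck : ∀ c, ¬ CStep (some A, τ) c) : Hist.fin [τ] false ∈ Oh A τ :=
  Or.inl ⟨_, List.isChain_singleton _, rfl, Or.inr ⟨⟨A, τ, rfl, hstuck⟩, rfl⟩⟩

theorem mem_Oh_glist {p : Prim I G} {l : List (Prim I G)} {τ : Store I} {h : Hist I}
    (hh : h ∈ Oh (Agent.glist p l) τ) :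
    (∃ ρ φ, primStep p τ ρ ∧ listExec l ρ φ ∧ h = Hist.fin [τ, φ] true) ∨
      ((∀ ρ φ, primStep p τ ρ → ¬ listExec l ρ φ) ∧ h = Hist.fin [τ] false) := by
  rcases hh with ⟨_ | ⟨c₀, _ | ⟨⟨o, φ⟩, cs⟩⟩, hch, hhd, hend⟩ | ⟨f, hf0, hf, -⟩
  · cases hhd
  · cases hhd
    rcases hend with ⟨⟨_, hlast⟩, -⟩ | ⟨⟨B, σ, hlast, hstuck⟩, rfl⟩
    · cases hlast
    · cases hlast
      exact Or.inr ⟨fun ρ φ hp hl => hstuck (none, φ) (Step.glist hp hl), rfl⟩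
  · cases hhd
    obtain ⟨hstep, hrest⟩ := List.isChain_cons_cons.1 hch
    obtain ⟨rfl, ρ, hp, hl⟩ := cStep_glist_iff.1 hstep
    obtain rfl : cs = [] := by
      rcases cs with _ | ⟨c, cs⟩
      · rfl
      · exact absurd (List.isChain_cons_cons.1 hrest).1 (not_cStep_of_fst_eq_none rfl)
    rcases hend with ⟨-, rfl⟩ | ⟨⟨B, σ, hlast, -⟩, -⟩
    · exact Or.inl ⟨ρ, φ, hp, hl, rfl⟩
    · cases hlast
  · exact absurd (hf 1) (not_cStep_of_fst_eq_none (cStep_glist_iff.1 (hf0 ▸ hf 0)).1)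

theorem Contraction.histReach {F : Store I → Prop} {h h' : Hist I}
    (hc : Contraction h h') (hr : histReach F h) : histReach F h' := by
  match h, h', hc, hr with
  | .fin _ _, .fin _ _, ⟨_, hsub⟩, ⟨σ, hσ, hF⟩ => exact ⟨σ, hsub.subset hσ, hF⟩
  | .inf _, .inf _, ⟨g, _, _, hg⟩, ⟨n, hF⟩ => exact ⟨g n, hg n ▸ hF⟩

end

end Bach

open Bach

/-- if `p₁,…,pₙ` are tell or graphical primitives then, for any primitive
`p`, the guarded list `GL = [p → p₁,…,pₙ]` refines the sequential composition
`SC = p; p₁; ⋯; pₙ`: for every store `τ`, every history of `Oh(GL)(τ)` is a contraction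
of some history of `Oh(SC)(τ)`.  Consequently, any reachability property established on
the stores generated by executing `GL` from `τ` also holds of the stores generated by
executing `SC` from `τ`. -/
theorem glist_refines_seq (I G : Type) (p : Prim I G) (l : List (Prim I G))
    (hl : ∀ q ∈ l, safePrim q) :
    (∀ τ : Store I, ∀ h ∈ Oh (Agent.glist p l) τ,
        ∃ h' ∈ Oh (seqComp p l) τ, Contraction h h') ∧
    (∀ (F : Store I → Prop) (τ : Store I),
        (∃ h ∈ Oh (Agent.glist p l) τ, histReach F h) →
        ∃ h' ∈ Oh (seqComp p l) τ, histReach F h') := by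
  have refines : ∀ τ : Store I, ∀ h ∈ Oh (Agent.glist p l) τ,
      ∃ h' ∈ Oh (seqComp p l) τ, Contraction h h' := by
    intro τ h hh
    rcases mem_Oh_glist hh with ⟨ρ, φ, hp, hexec, rfl⟩ | ⟨hblocked, rfl⟩
    · obtain ⟨cs, hcs, hlast⟩ := exists_run_seqComp hp hexec
      have hφ : φ ∈ cs.map Prod.snd := List.mem_map_of_mem (List.mem_of_getLast? hlast)
      exact ⟨_, fin_mem_Oh_of_run hcs hlast, rfl,
        (List.singleton_sublist.2 hφ).cons_cons τ⟩
    · have hp : ∀ ρ, ¬ primStep p τ ρ := fun ρ hp =>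
        let ⟨φ, hexec⟩ := exists_listExec_of_safe hl ρ
        hblocked ρ φ hp hexec
      exact ⟨_, fin_mem_Oh_of_stuck (not_cStep_seqComp hp), rfl, List.Sublist.refl _⟩
  refine ⟨refines, fun F τ ⟨h, hh, hr⟩ => ?_⟩
  obtain ⟨h', hh', hc⟩ := refines τ h hh
  exact ⟨h', hh', hc.histReach hr⟩
end

section
/- There is no modular embedding of gdLg(ask, tell) into rLg(ask, tell): gdLg(ask, tell) ≰ rLg(ask, tell). That is, there exist no compositional coder C from the ask/tell fragment with guarded lists into the ask/tell fragment without guarded lists and element-wise termination-preserving decoder D_el such that for every agent A of gdLg(ask, tell), Of(A) = {D_el(x) : x ∈ Of(C(A))}. -/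
open Bach

/-!
The guarded list `[ask a → ask b]` is enabled on a store holding both `a` and `b` but on neither
`{a}` nor `{b}`. An ask/tell agent without guarded lists cannot behave like this: it is stuck on
`σ + τ` as soon as it is stuck on `σ` and on `τ`, and its runs can be replayed on larger stores.

Let `c`, `e`, `g` be the codes of `tell a`, `tell b` and `[ask a → ask b]`. As `tell a; [ask a →
ask b]` never succeeds and `tell a; ([ask a → ask b] + tell a)` never deadlocks, `g` is stuck
after any successful run of `c` (all computations terminate); likewise after one of `e`. Running
`e` after `c` therefore leaves `g` stuck on the union of the two final stores, so `c; (e; g)` can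
deadlock, whereas `tell a; (tell b; [ask a → ask b])` always succeeds.
-/

namespace Bach

variable {I G : Type}

abbrev askTell : Set PKind := {PKind.ask, PKind.tell}

def askBoth (a b : I) : Agent I G := .glist (.ask a) [.ask b]

def Agent.size : Agent I G → ℕ
  | .prim _ | .glist _ _ => 1
  | .seq A B | .par A B | .choice A B => A.size + B.size + 1

def Conf.size : Conf I G → ℕ
  | (none, _) => 0
  | (some A, _) => A.size

lemma Step.size_lt {A : Agent I G} {σ τ : Store I} {o : Option (Agent I G)}
    (h : Step A σ o τ) : ∀ A' ∈ o, A'.size < A.size := by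
  induction h with
  | prim _ | glist _ _ => simp
  | seqE _ | parLE _ | parRE _ => simp [Agent.size]
  | seqS _ ih | parLS _ ih | parRS _ ih =>
    simp only [Option.mem_def, Option.some.injEq, forall_eq', Agent.size]
    have := ih _ rfl
    omega
  | choiceL _ ih | choiceR _ ih =>
    exact fun A' hA' => (ih A' hA').trans (by simp only [Agent.size]; omega)

lemma Agent.size_pos (A : Agent I G) : 0 < A.size := by
  cases A <;> simp [Agent.size]

lemma CStep.size_lt {c d : Conf I G} (h : CStep c d) : d.size < c.size := by
  obtain ⟨_ | A, σ⟩ := c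
  · exact h.elim
  obtain ⟨_ | A', τ⟩ := d
  · exact A.size_pos
  · exact Step.size_lt h A' rfl

lemma wellFounded_flip_cStep : WellFounded (flip (CStep : Conf I G → Conf I G → Prop)) :=
  Subrelation.wf (fun h => CStep.size_lt h) (measure Conf.size).wf

lemma exists_reflTransGen_terminal (c : Conf I G) :
    ∃ e, Relation.ReflTransGen CStep c e ∧ ∀ d, ¬ CStep e d := by
  obtain ⟨e, he, hmin⟩ := wellFounded_flip_cStep.has_min {e | Relation.ReflTransGen CStep c e}
    ⟨c, .refl⟩
  exact ⟨e, he, fun d hd => hmin d (he.tail hd) hd⟩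

def Conf.seq (B : Agent I G) : Conf I G → Conf I G
  | (none, σ) => (some B, σ)
  | (some A, σ) => (some (A.seq B), σ)

lemma CStep.seq {c d : Conf I G} (B : Agent I G) (h : CStep c d) : CStep (c.seq B) (d.seq B) := by
  obtain ⟨_ | A, σ⟩ := c
  · exact h.elim
  obtain ⟨_ | A', τ⟩ := d
  · exact Step.seqE h
  · exact Step.seqS h

lemma reflTransGen_seq {A : Agent I G} {σ τ : Store I}
    (h : Relation.ReflTransGen CStep (some A, σ) (none, τ)) (B : Agent I G) :
    Relation.ReflTransGen CStep (some (A.seq B), σ) (some B, τ) :=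
  h.lift (Conf.seq B) fun _ _ => CStep.seq B

section Monotone

lemma primStep_add {p : Prim I G} {σ τ : Store I} (hp : primIn askTell p)
    (h : primStep p σ τ) (δ : Store I) : primStep p (σ + δ) (τ + δ) := by
  cases p with
  | tell t => simp_all [primStep, Multiset.cons_add]
  | ask t => exact ⟨Multiset.mem_add.2 (Or.inl h.1), by rw [h.2]⟩
  | gr g => simp_all [primStep]
  | nask t | get t => simp [primIn] at hp

lemma listExec_add {l : List (Prim I G)} {σ τ : Store I} (hl : ∀ p ∈ l, primIn askTell p)
    (h : listExec l σ τ) (δ : Store I) : listExec l (σ + δ) (τ + δ) := by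
  induction l generalizing σ with
  | nil => simp_all [listExec]
  | cons p l ih =>
    obtain ⟨ρ, hp, hl'⟩ := h
    exact ⟨ρ + δ, primStep_add (hl p (by simp)) hp δ,
      ih (fun q hq => hl q (by simp [hq])) hl'⟩

lemma Step.add {A : Agent I G} {σ τ : Store I} {o : Option (Agent I G)} (h : Step A σ o τ)
    (hA : agentIn askTell A) (δ : Store I) : Step A (σ + δ) o (τ + δ) := by
  induction h with
  | prim hp => exact .prim (primStep_add hA hp δ)
  | glist hp hl => exact .glist (primStep_add hA.1 hp δ) (listExec_add hA.2 hl δ)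
  | seqE _ ih => exact .seqE (ih hA.1)
  | seqS _ ih => exact .seqS (ih hA.1)
  | parLE _ ih => exact .parLE (ih hA.1)
  | parLS _ ih => exact .parLS (ih hA.1)
  | parRE _ ih => exact .parRE (ih hA.2)
  | parRS _ ih => exact .parRS (ih hA.2)
  | choiceL _ ih => exact .choiceL (ih hA.1)
  | choiceR _ ih => exact .choiceR (ih hA.2)

lemma Step.agentIn {X : Set PKind} {A : Agent I G} {σ τ : Store I} {o : Option (Agent I G)}
    (h : Step A σ o τ) (hA : agentIn X A) : ∀ A' ∈ o, agentIn X A' := by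
  induction h with
  | prim _ | glist _ _ => simp
  | seqE _ | parLE _ => simpa using hA.2
  | parRE _ => simpa using hA.1
  | seqS _ ih | parLS _ ih => simpa using ⟨ih hA.1 _ rfl, hA.2⟩
  | parRS _ ih => simpa using ⟨hA.1, ih hA.2 _ rfl⟩
  | choiceL _ ih => exact ih hA.1
  | choiceR _ ih => exact ih hA.2

lemma reflTransGen_add {c d : Conf I G} (h : Relation.ReflTransGen CStep c d)
    (hc : ∀ A ∈ c.1, A ∈ gdLg askTell) (δ : Store I) :
    Relation.ReflTransGen CStep (c.1, c.2 + δ) (d.1, d.2 + δ) := by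
  induction h using Relation.ReflTransGen.head_induction_on with
  | refl => rfl
  | @head c c' hstep _ ih =>
    obtain ⟨_ | A, σ⟩ := c
    · exact hstep.elim
    have hA : A ∈ gdLg askTell := hc A rfl
    have hstep' : CStep (some A, σ + δ) (c'.1, c'.2 + δ) := Step.add hstep hA δ
    exact .head hstep' (ih (Step.agentIn hstep hA))

end Monotone

def Enabled (A : Agent I G) (σ : Store I) : Prop := ∃ o τ, Step A σ o τ

section Enabled

variable {A B : Agent I G} {σ : Store I}

lemma not_enabled_iff : ¬ Enabled A σ ↔ ∀ c, ¬ CStep (some A, σ) c := by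
  simp [Enabled, Prod.forall, CStep]

@[simp] lemma enabled_prim_iff {p : Prim I G} : Enabled (.prim p) σ ↔ ∃ τ, primStep p σ τ :=
  ⟨fun ⟨_, τ, .prim h⟩ => ⟨τ, h⟩, fun ⟨τ, h⟩ => ⟨_, τ, .prim h⟩⟩

lemma enabled_tell (t : I) : Enabled (.prim (.tell t) : Agent I G) σ :=
  ⟨none, _, .prim (p := .tell t) rfl⟩

@[simp] lemma enabled_seq_iff : Enabled (A.seq B) σ ↔ Enabled A σ := by
  refine ⟨fun ⟨_, τ, h⟩ => ?_, fun ⟨o, τ, h⟩ => ?_⟩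
  · cases h with
    | seqE h | seqS h => exact ⟨_, τ, h⟩
  · cases o
    exacts [⟨_, τ, .seqE h⟩, ⟨_, τ, .seqS h⟩]

@[simp] lemma enabled_par_iff : Enabled (A.par B) σ ↔ Enabled A σ ∨ Enabled B σ := by
  refine ⟨fun ⟨_, τ, h⟩ => ?_, fun h => ?_⟩
  · cases h with
    | parLE h | parLS h => exact .inl ⟨_, τ, h⟩
    | parRE h | parRS h => exact .inr ⟨_, τ, h⟩
  · rcases h with ⟨o, τ, h⟩ | ⟨o, τ, h⟩ <;> cases o
    exacts [⟨_, τ, .parLE h⟩, ⟨_, τ, .parLS h⟩, ⟨_, τ, .parRE h⟩, ⟨_, τ, .parRS h⟩]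

@[simp] lemma enabled_choice_iff : Enabled (A.choice B) σ ↔ Enabled A σ ∨ Enabled B σ := by
  refine ⟨fun ⟨_, τ, h⟩ => ?_, fun h => ?_⟩
  · cases h with
    | choiceL h => exact .inl ⟨_, τ, h⟩
    | choiceR h => exact .inr ⟨_, τ, h⟩
  · rcases h with ⟨o, τ, h⟩ | ⟨o, τ, h⟩
    exacts [⟨o, τ, .choiceL h⟩, ⟨o, τ, .choiceR h⟩]

lemma enabled_askBoth_iff {a b : I} : Enabled (askBoth a b : Agent I G) σ ↔ a ∈ σ ∧ b ∈ σ := by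
  constructor
  · rintro ⟨_, _, h⟩
    cases h with
    | glist hp hl =>
      obtain ⟨ha, rfl⟩ := hp
      obtain ⟨_, ⟨hb, rfl⟩, -⟩ := hl
      exact ⟨ha, hb⟩
  · rintro ⟨ha, hb⟩
    exact ⟨none, σ, .glist ⟨ha, rfl⟩ ⟨σ, ⟨hb, rfl⟩, rfl⟩⟩

lemma Enabled.of_reflTransGen_none {τ : Store I}
    (h : Relation.ReflTransGen CStep (some A, σ) (none, τ)) : Enabled A σ := by
  obtain ⟨⟨o, ρ⟩, hstep, -⟩ := (Relation.ReflTransGen.cases_head h).resolve_left (by simp)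
  exact ⟨o, ρ, hstep⟩

/-- Ask/tell agents without guarded lists test one store item at a time, so whatever is enabled
on a union of stores is already enabled on one of them. -/
lemma Enabled.of_add {τ : Store I} (hA : A ∈ rLg askTell) (h : Enabled A (σ + τ)) :
    Enabled A σ ∨ Enabled A τ := by
  obtain ⟨hin, hfree⟩ := hA
  induction A with
  | prim p =>
    obtain ⟨ρ, hp⟩ := enabled_prim_iff.1 h
    cases p with
    | tell t => exact .inl (enabled_tell t)
    | ask t =>
      simp only [enabled_prim_iff, primStep, exists_eq_right]
      exact Multiset.mem_add.1 hp.1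
    | gr g => exact .inl (enabled_prim_iff.2 ⟨σ, rfl⟩)
    | nask t | get t => simp [agentIn, primIn] at hin
  | glist => exact hfree.elim
  | seq A B ihA _ => simpa using ihA (by simpa using h) hin.1 hfree.1
  | par A B ihA ihB | choice A B ihA ihB =>
    simp only [enabled_par_iff, enabled_choice_iff] at h ⊢
    rcases h with h | h
    · rcases ihA h hin.1 hfree.1 with h' | h' <;> tauto
    · rcases ihB h hin.2 hfree.2 with h' | h' <;> tauto

end Enabled

def marks (A : Agent I G) : Set Bool := Prod.snd '' Obs A

section Marks

variable {A : Agent I G}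

lemma true_mem_marks_iff :
    true ∈ marks A ↔ ∃ σ, Relation.ReflTransGen CStep (some A, 0) (none, σ) := by
  simp [marks, Obs]

lemma false_mem_marks_iff : false ∈ marks A ↔
    ∃ B σ, Relation.ReflTransGen CStep (some A, 0) (some B, σ) ∧ ¬ Enabled B σ := by
  simp only [marks, Obs, not_enabled_iff]
  simpa using exists_comm

lemma true_mem_marks_tell (t : I) : true ∈ marks (Agent.prim (.tell t) : Agent I G) :=
  true_mem_marks_iff.2 ⟨_, .single (Step.prim (p := .tell t) rfl)⟩

lemma IsModularEmbedding.marks_eq {C : Agent I G → Agent I G} {D : Store I × Bool → Store I × Bool}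
    {L' L : Set (Agent I G)} (h : IsModularEmbedding C D L' L) (hA : A ∈ L') :
    marks (C A) = marks A := by
  rw [marks, marks, h.2.2.2.2.2 A hA, Set.image_image]
  exact Set.image_congr fun x _ => (h.2.2.2.2.1 x).symm

lemma IsModularEmbedding.marks_seq {X : Set PKind} {C : Agent I G → Agent I G}
    {D : Store I × Bool → Store I × Bool} {L : Set (Agent I G)} {B : Agent I G}
    (h : IsModularEmbedding C D (gdLg X) L) (hA : A ∈ gdLg X) (hB : B ∈ gdLg X) :
    marks ((C A).seq (C B)) = marks (A.seq B) := by
  rw [← h.2.1 A B hA hB]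
  exact h.marks_eq (show agentIn X (A.seq B) from ⟨hA, hB⟩)

def DeadlockFree (A : Agent I G) (σ : Store I) : Prop :=
  ∀ B τ, Relation.ReflTransGen CStep (some A, σ) (some B, τ) → Enabled B τ

lemma DeadlockFree.false_not_mem_marks (h : DeadlockFree A 0) : false ∉ marks A := by
  rw [false_mem_marks_iff]
  rintro ⟨B, σ, hB, hstuck⟩
  exact hstuck (h B σ hB)

def IsAtomic (A : Agent I G) : Prop := ∀ σ o τ, Step A σ o τ → o = none

lemma isAtomic_askBoth (a b : I) : IsAtomic (askBoth a b : Agent I G) := by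
  rintro σ o τ ⟨⟩
  rfl

lemma isAtomic_prim (p : Prim I G) : IsAtomic (.prim p) := by
  rintro σ o τ ⟨⟩
  rfl

lemma IsAtomic.choice {B : Agent I G} (hA : IsAtomic A) (hB : IsAtomic B) :
    IsAtomic (A.choice B) := by
  intro σ o τ h
  cases h with
  | choiceL h => exact hA σ o τ h
  | choiceR h => exact hB σ o τ h

lemma IsAtomic.deadlockFree {σ : Store I} (hA : IsAtomic A) (h : Enabled A σ) :
    DeadlockFree A σ := by
  intro B τ hB
  rcases Relation.ReflTransGen.cases_head hB with hAB | ⟨⟨o, ρ⟩, hstep, hrest⟩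
  · cases hAB
    exact h
  · obtain rfl : o = none := hA σ o ρ hstep
    rcases Relation.ReflTransGen.cases_head hrest with h | ⟨_, h, -⟩
    · cases h
    · exact h.elim

lemma reflTransGen_tell_seq {t : I} {σ : Store I} {c : Conf I G}
    (h : Relation.ReflTransGen CStep (some ((Agent.prim (.tell t)).seq A), σ) c) :
    c = (some ((Agent.prim (.tell t)).seq A), σ) ∨
      Relation.ReflTransGen CStep (some A, t ::ₘ σ) c := by
  rcases Relation.ReflTransGen.cases_head h with h | ⟨d, hstep, hrest⟩
  · exact .inl h.symm
  · right
    obtain ⟨o, ρ⟩ := d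
    change Step _ σ o ρ at hstep
    cases hstep with
    | seqE h =>
      cases h
      subst_vars
      exact hrest
    | seqS h => cases h

lemma DeadlockFree.tell_seq {t : I} {σ : Store I} (h : DeadlockFree A (t ::ₘ σ)) :
    DeadlockFree ((Agent.prim (.tell t)).seq A) σ := by
  intro B τ hB
  rcases reflTransGen_tell_seq hB with hB | hB
  · cases hB
    exact enabled_seq_iff.2 (enabled_tell t)
  · exact h B τ hB

lemma true_not_mem_marks_tell_seq {t : I} (h : ¬ Enabled A {t}) :
    true ∉ marks ((Agent.prim (.tell t)).seq A) := by
  rw [true_mem_marks_iff]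
  rintro ⟨σ, hσ⟩
  rcases reflTransGen_tell_seq hσ with hσ | hσ
  · cases hσ
  · exact h (Enabled.of_reflTransGen_none hσ)

lemma false_not_mem_marks_tell_seq_choice_tell {s t : I} (hA : IsAtomic A) :
    false ∉ marks ((Agent.prim (.tell s)).seq (A.choice (.prim (.tell t)))) :=
  ((hA.choice (isAtomic_prim _)).deadlockFree
    (enabled_choice_iff.2 (.inr (enabled_tell t)))).tell_seq.false_not_mem_marks

lemma false_not_mem_marks_tell_seq_tell_seq_askBoth (a b : I) :
    false ∉ marks ((Agent.prim (.tell a)).seq ((Agent.prim (.tell b)).seq (askBoth a b))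
      : Agent I G) :=
  ((isAtomic_askBoth a b).deadlockFree
    (enabled_askBoth_iff.2 (by simp))).tell_seq.tell_seq.false_not_mem_marks

end Marks

/-- If `g` could move after a successful run of `c`, then following `g` to a terminal
configuration would make `c; g` succeed or `c; (g + g')` deadlock. -/
lemma not_enabled_of_marks {c g g' : Agent I G} {σ : Store I}
    (hc : Relation.ReflTransGen CStep (some c, 0) (none, σ))
    (hsucc : true ∉ marks (c.seq g)) (hdead : false ∉ marks (c.seq (g.choice g'))) :
    ¬ Enabled g σ := by
  rintro ⟨o, ρ, hstep⟩
  have hg : CStep (some g, σ) (o, ρ) := hstep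
  have hg' : CStep (some (g.choice g'), σ) (o, ρ) := Step.choiceL hstep
  obtain ⟨⟨_ | B, τ⟩, hrun, hterm⟩ := exists_reflTransGen_terminal (o, ρ)
  · exact hsucc (true_mem_marks_iff.2 ⟨τ, (reflTransGen_seq hc g).trans (.head hg hrun)⟩)
  · exact hdead (false_mem_marks_iff.2
      ⟨B, τ, (reflTransGen_seq hc _).trans (.head hg' hrun), not_enabled_iff.2 hterm⟩)

lemma false_mem_marks_seq_seq {c e g : Agent I G} {σ₁ σ₂ : Store I}
    (hc : Relation.ReflTransGen CStep (some c, 0) (none, σ₁))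
    (he : Relation.ReflTransGen CStep (some e, 0) (none, σ₂)) (he' : e ∈ gdLg askTell)
    (hg : g ∈ rLg askTell) (hg₁ : ¬ Enabled g σ₁) (hg₂ : ¬ Enabled g σ₂) :
    false ∈ marks (c.seq (e.seq g)) := by
  have he₁ : Relation.ReflTransGen CStep (some e, σ₁) (none, σ₂ + σ₁) := by
    simpa using reflTransGen_add he (by simpa using he') σ₁
  refine false_mem_marks_iff.2 ⟨g, σ₂ + σ₁, ?_, fun h => ?_⟩
  · exact (reflTransGen_seq hc _).trans (reflTransGen_seq he₁ g)
  · exact (h.of_add hg).elim hg₂ hg₁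

end Bach

/-- there is no modular embedding of `gdLg(ask, tell)` into
`rLg(ask, tell)` (assuming at least two distinct si-terms). -/
theorem no_modEmbed_ask_tell (I G : Type) (a b : I) (hab : a ≠ b) :
    ¬ ModEmbed (gdLg ({PKind.ask, PKind.tell} : Set PKind) : Set (Agent I G))
        (rLg ({PKind.ask, PKind.tell} : Set PKind)) := by
  rintro ⟨C, D, hCD⟩
  have hA : (askBoth a b : Agent I G) ∈ gdLg askTell := ⟨.inl rfl, by simp [primIn]⟩
  have htell (t : I) : Agent.prim (.tell t) ∈ gdLg (G := G) askTell := .inr rfl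
  have hAa : (askBoth a b).choice (.prim (.tell a)) ∈ gdLg askTell := ⟨hA, htell a⟩
  have hbA : (Agent.prim (.tell b)).seq (askBoth a b) ∈ gdLg askTell := ⟨htell b, hA⟩
  have runs (t : I) : ∃ σ, Relation.ReflTransGen CStep (some (C (.prim (.tell t))), 0) (none, σ) :=
    true_mem_marks_iff.1 <| (hCD.marks_eq (htell t)).symm ▸ true_mem_marks_tell t
  have stuck (t : I) (ht : ¬ Enabled (askBoth a b : Agent I G) {t}) {σ : Store I}
      (hσ : Relation.ReflTransGen CStep (some (C (.prim (.tell t))), 0) (none, σ)) :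
      ¬ Enabled (C (askBoth a b)) σ := by
    refine not_enabled_of_marks (g' := C (.prim (.tell a))) hσ ?_ ?_
    · rw [hCD.marks_seq (htell t) hA]
      exact true_not_mem_marks_tell_seq ht
    · rw [← hCD.2.2.2.1 _ _ hA (htell a), hCD.marks_seq (htell t) hAa]
      exact false_not_mem_marks_tell_seq_choice_tell (isAtomic_askBoth a b)
  obtain ⟨σ₁, hσ₁⟩ := runs a
  obtain ⟨σ₂, hσ₂⟩ := runs b
  have hdead := false_mem_marks_seq_seq hσ₁ hσ₂ (hCD.1 _ (htell b)).1 (hCD.1 _ hA)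
    (stuck a (by simp [enabled_askBoth_iff, Ne.symm hab]) hσ₁)
    (stuck b (by simp [enabled_askBoth_iff, hab]) hσ₂)
  rw [← hCD.2.1 _ _ (htell b) hA, hCD.marks_seq (htell a) hbA] at hdead
  exact false_not_mem_marks_tell_seq_tell_seq_askBoth a b hdead
end

section
/- There is no modular embedding of gdLg(ask, nask, get, tell) into rLg(ask, nask, get, tell): gdLg(ask, nask, get, tell) ≰ rLg(ask, nask, get, tell). That is, there exist no compositional coder C from the full fragment with guarded lists into the full fragment without guarded lists and element-wise termination-preserving decoder D_el such that for every agent A of gdLg(ask, nask, get, tell), Of(A) = {D_el(x) : x ∈ Of(C(A))}. -/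
open Bach

/-!
A guarded-list-free agent cannot perform an atomic test-and-set. Each of its steps is a
single primitive step, and a primitive step from `σ` to `τ` can equally be taken from
`σ + σ` to `σ + τ` and from `σ + τ` to `τ + τ`. Hence if `⟨B, 0⟩ →* ⟨E, σ⟩`, two copies
of `B` running in lockstep give `⟨B ∥ B, 0⟩ →* ⟨E, σ + σ⟩`. Apply this to the coding of
`U = [nask(a) → tell(a)]`: `U` succeeds, so `C(U)` succeeds, so `C(U ∥ U) = C(U) ∥ C(U)`
succeeds and the decoder yields a successful observable of `U ∥ U`. But `U ∥ U` always
deadlocks: whichever copy moves first tells `a`, and the other one's `nask(a)` is then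
blocked forever.
-/

namespace Bach

variable {I G : Type}

theorem primStep_add_left {p : Prim I G} {σ τ : Store I} (h : primStep p σ τ) {ρ : Store I}
    (hρ : ∀ t, p = .nask t → t ∉ ρ) : primStep p (ρ + σ) (ρ + τ) := by
  cases p <;> simp_all [primStep, Multiset.add_cons]

theorem glFree_of_step {A : Agent I G} {σ τ : Store I} {o : Option (Agent I G)}
    (h : Step A σ o τ) (hA : glFree A) : ∀ A' ∈ o, glFree A' := by
  induction h with
  | prim _ | glist _ _ => simp
  | seqE _ _ | parLE _ _ => simpa using hA.2
  | parRE _ _ => simpa using hA.1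
  | seqS _ ih | parLS _ ih => simpa using ⟨ih hA.1 _ rfl, hA.2⟩
  | parRS _ ih => simpa using ⟨hA.1, ih hA.2 _ rfl⟩
  | choiceL _ ih => exact ih hA.1
  | choiceR _ ih => exact ih hA.2

theorem exists_primStep_of_step {A : Agent I G} {σ τ : Store I} {o : Option (Agent I G)}
    (h : Step A σ o τ) (hA : glFree A) :
    ∃ p : Prim I G, primStep p σ τ ∧ ∀ σ' τ', primStep p σ' τ' → Step A σ' o τ' := by
  induction h with
  | prim hp => exact ⟨_, hp, fun _ _ => .prim⟩
  | glist _ _ => exact hA.elim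
  | seqE _ ih => exact (ih hA.1).imp fun _ ⟨hp, hl⟩ => ⟨hp, fun _ _ h => .seqE (hl _ _ h)⟩
  | seqS _ ih => exact (ih hA.1).imp fun _ ⟨hp, hl⟩ => ⟨hp, fun _ _ h => .seqS (hl _ _ h)⟩
  | parLE _ ih => exact (ih hA.1).imp fun _ ⟨hp, hl⟩ => ⟨hp, fun _ _ h => .parLE (hl _ _ h)⟩
  | parLS _ ih => exact (ih hA.1).imp fun _ ⟨hp, hl⟩ => ⟨hp, fun _ _ h => .parLS (hl _ _ h)⟩
  | parRE _ ih => exact (ih hA.2).imp fun _ ⟨hp, hl⟩ => ⟨hp, fun _ _ h => .parRE (hl _ _ h)⟩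
  | parRS _ ih => exact (ih hA.2).imp fun _ ⟨hp, hl⟩ => ⟨hp, fun _ _ h => .parRS (hl _ _ h)⟩
  | choiceL _ ih => exact (ih hA.1).imp fun _ ⟨hp, hl⟩ => ⟨hp, fun _ _ h => .choiceL (hl _ _ h)⟩
  | choiceR _ ih => exact (ih hA.2).imp fun _ ⟨hp, hl⟩ => ⟨hp, fun _ _ h => .choiceR (hl _ _ h)⟩

def Conf.double (c : Conf I G) : Conf I G :=
  (c.1.map fun A => .par A A, c.2 + c.2)

theorem reflTransGen_double_of_cStep {A : Agent I G} {σ : Store I} {c : Conf I G} (hA : glFree A)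
    (h : CStep (some A, σ) c) : Relation.ReflTransGen CStep (Conf.double (some A, σ)) c.double := by
  obtain ⟨o, τ⟩ := c
  obtain ⟨p, hp, hlift⟩ := exists_primStep_of_step h hA
  have hσ : ∀ t, p = .nask t → t ∉ σ := by rintro t rfl; exact hp.1
  have hτ : ∀ t, p = .nask t → t ∉ τ := by rintro t rfl; exact hp.2 ▸ hp.1
  have first : Step A (σ + σ) o (σ + τ) := hlift _ _ (primStep_add_left hp hσ)
  have second : Step A (σ + τ) o (τ + τ) :=
    add_comm τ σ ▸ hlift _ _ (primStep_add_left hp hτ)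
  cases o with
  | none =>
    have s₁ : CStep (Conf.double (some A, σ)) (some A, σ + τ) := Step.parLE first
    have s₂ : CStep (some A, σ + τ) (Conf.double (none, τ)) := second
    exact .head s₁ (.single s₂)
  | some A' =>
    have s₁ : CStep (Conf.double (some A, σ)) (some (.par A' A), σ + τ) := Step.parLS first
    have s₂ : CStep (some (.par A' A), σ + τ) (Conf.double (some A', τ)) := Step.parRS second
    exact .head s₁ (.single s₂)

theorem reflTransGen_double {c c' : Conf I G} (h : Relation.ReflTransGen CStep c c')
    (hc : ∀ A ∈ c.1, glFree A) : Relation.ReflTransGen CStep c.double c'.double := by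
  induction h using Relation.ReflTransGen.head_induction_on with
  | refl => rfl
  | @head c₀ c₁ hstep _ ih =>
    obtain ⟨_ | A, σ⟩ := c₀
    · exact False.elim hstep
    obtain ⟨o, τ⟩ := c₁
    have hA : glFree A := hc A rfl
    exact (reflTransGen_double_of_cStep hA hstep).trans (ih (glFree_of_step hstep hA))

theorem mem_Obs_true {A : Agent I G} {σ : Store I} :
    (σ, true) ∈ Obs A ↔ Relation.ReflTransGen CStep (some A, 0) (none, σ) := by
  simp [Obs]

theorem IsModularEmbedding.exists_success_par_self {C : Agent I G → Agent I G}
    {D : Store I × Bool → Store I × Bool} {L' L : Set (Agent I G)}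
    (hCD : IsModularEmbedding C D L' L) (hL : ∀ B ∈ L, glFree B) {A : Agent I G} (hA : A ∈ L')
    (hAA : Agent.par A A ∈ L') {σ : Store I} (hσ : (σ, true) ∈ Obs A) :
    ∃ τ, (τ, true) ∈ Obs (Agent.par A A) := by
  obtain ⟨hmem, -, hpar, -, hD, hobs⟩ := hCD
  obtain ⟨⟨ρ, b⟩, hρ, hDρ⟩ := hobs A hA ▸ hσ
  obtain rfl : b = true := (hD (ρ, b)).symm.trans (congrArg Prod.snd hDρ)
  have hdouble : (ρ + ρ, true) ∈ Obs (C (Agent.par A A)) := by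
    rw [hpar A A hA hA, mem_Obs_true]
    simpa [Conf.double] using
      reflTransGen_double (mem_Obs_true.1 hρ) (by simpa using hL _ (hmem A hA))
  have hy : D (ρ + ρ, true) = ((D (ρ + ρ, true)).1, true) := Prod.ext rfl (hD _)
  refine ⟨(D (ρ + ρ, true)).1, ?_⟩
  rw [← hy, hobs _ hAA]
  exact ⟨_, hdouble, rfl⟩

def testAndSet (a : I) : Agent I G := .glist (.nask a) [.tell a]

theorem testAndSet_mem_gdLg (a : I) {X : Set PKind} (hn : PKind.nask ∈ X) (ht : PKind.tell ∈ X) :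
    (testAndSet a : Agent I G) ∈ gdLg X :=
  ⟨hn, by simpa [primIn] using ht⟩

theorem step_testAndSet_iff {a : I} {σ τ : Store I} {o : Option (Agent I G)} :
    Step (testAndSet a) σ o τ ↔ o = none ∧ a ∉ σ ∧ τ = a ::ₘ σ := by
  constructor
  · rintro (_ | ⟨⟨ha, rfl⟩, _, rfl, rfl⟩)
    exact ⟨rfl, ha, rfl⟩
  · rintro ⟨rfl, ha, rfl⟩
    exact .glist ⟨ha, rfl⟩ ⟨_, rfl, rfl⟩

theorem testAndSet_success (a : I) : (a ::ₘ 0, true) ∈ Obs (testAndSet a : Agent I G) :=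
  mem_Obs_true.2 (.single (step_testAndSet_iff.2 ⟨rfl, Multiset.notMem_zero a, rfl⟩))

theorem reachable_par_testAndSet {a : I} {c : Conf I G}
    (h : Relation.ReflTransGen CStep (some (.par (testAndSet a) (testAndSet a)), 0) c) :
    c = (some (.par (testAndSet a) (testAndSet a)), 0) ∨ c = (some (testAndSet a), a ::ₘ 0) := by
  induction h with
  | refl => exact Or.inl rfl
  | @tail c₁ c₂ _ hstep ih =>
    obtain ⟨o, τ⟩ := c₂
    rcases ih with rfl | rfl
    · change Step (.par _ _) _ o τ at hstep
      cases hstep with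
      | parLE h | parRE h =>
        obtain ⟨-, -, rfl⟩ := step_testAndSet_iff.1 h
        exact Or.inr rfl
      | parLS h | parRS h => cases (step_testAndSet_iff.1 h).1
    · exact absurd (step_testAndSet_iff.1 hstep).2.1 (by simp)

theorem not_success_par_testAndSet (a : I) (σ : Store I) :
    (σ, true) ∉ Obs (.par (testAndSet a) (testAndSet a) : Agent I G) := by
  intro h
  rcases reachable_par_testAndSet (mem_Obs_true.1 h) with h | h <;> simp at h

end Bach

theorem no_modEmbed_ask_nask_get_tell_general (I G : Type) (a : I) :
    ¬ ModEmbed (gdLg ({PKind.ask, PKind.nask, PKind.get, PKind.tell} : Set PKind) : Set (Agent I G))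
        (rLg ({PKind.ask, PKind.nask, PKind.get, PKind.tell} : Set PKind)) := by
  rintro ⟨C, D, hCD⟩
  have hU : (testAndSet a : Agent I G) ∈ gdLg {PKind.ask, PKind.nask, PKind.get, PKind.tell} :=
    testAndSet_mem_gdLg a (by simp) (by simp)
  obtain ⟨τ, hτ⟩ :=
    hCD.exists_success_par_self (fun _ hB => hB.2) hU ⟨hU, hU⟩ (testAndSet_success a)
  exact not_success_par_testAndSet a τ hτ

/-- there is no modular embedding of `gdLg(ask, nask, get, tell)` into
`rLg(ask, nask, get, tell)` (assuming at least two distinct si-terms). -/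
theorem no_modEmbed_ask_nask_get_tell (I G : Type) (a b : I) (hab : a ≠ b) :
    ¬ ModEmbed (gdLg ({PKind.ask, PKind.nask, PKind.get, PKind.tell} : Set PKind) : Set (Agent I G))
        (rLg ({PKind.ask, PKind.nask, PKind.get, PKind.tell} : Set PKind)) :=
  no_modEmbed_ask_nask_get_tell_general I G a
end
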